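/- (Braid Vandermonde identity.) For all integers a, m, n, k ≥ 0: Ш_{m+n−a,a}^{↑k} · β_{k,a} = Σ_{b,c ≥ 0, b+c=a} Ш_{m−b,b}^{↑k} · Ш_{n−c,c}^{↑(m+k)} · β_{k,b} · β_{m+k−b,c}^{↑b} in 𝕜B_∞. -/

import Mathlib

namespace BraidPaper

/-- Relations of the infinite Artin braid group `B_∞`.  The generator with index `n : ℕ`
represents the Artin generator `σ_{n+1}` (so generators are `σ_1, σ_2, …`). -/
def BraidRels : Set (FreeGroup ℕ) :=
  {r | (∃ i : ℕ, r = .of i * .of (i + 1) * .of i * (.of (i + 1) * .of i * .of (i + 1))⁻¹) ∨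
       (∃ i j : ℕ, i + 2 ≤ j ∧ r = .of i * .of j * (.of j * .of i)⁻¹)}

/-- The infinite Artin braid group `B_∞`, presented by generators `σ_1, σ_2, …` and the
braid and far-commutativity relations. -/
abbrev BInf : Type := PresentedGroup BraidRels

/-- The Artin generator `σ i` of `B_∞` (meaningful for `i ≥ 1`). -/
def σ (i : ℕ) : BInf := PresentedGroup.of (i - 1)

lemma rel_eq_one {r : FreeGroup ℕ} (hr : r ∈ BraidRels) : PresentedGroup.mk BraidRels r = 1 := by
  have : r ∈ Subgroup.normalClosure BraidRels := Subgroup.subset_normalClosure hr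
  exact (QuotientGroup.eq_one_iff r).mpr this

lemma gen_braid (i : ℕ) :
    (PresentedGroup.of i : BInf) * .of (i + 1) * .of i = .of (i + 1) * .of i * .of (i + 1) := by
  have h := rel_eq_one (Or.inl ⟨i, rfl⟩)
  rw [map_mul, map_mul, map_mul, map_inv, map_mul, map_mul, mul_inv_eq_one] at h
  exact h

lemma gen_comm {i j : ℕ} (hij : i + 2 ≤ j) :
    (PresentedGroup.of i : BInf) * .of j = .of j * .of i := by
  have h := rel_eq_one (Or.inr ⟨i, j, hij, rfl⟩)
  rw [map_mul, map_mul, map_inv, map_mul, mul_inv_eq_one] at h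
  exact h

/-- The shift endomorphism `↑ℓ : B_∞ → B_∞`, `σ_i ↦ σ_{i+ℓ}`. -/
def shift (l : ℕ) : BInf →* BInf :=
  PresentedGroup.toGroup (f := fun n => (PresentedGroup.of (n + l) : BInf)) (by
    rintro r (⟨i, rfl⟩ | ⟨i, j, hij, rfl⟩) <;>
      simp only [map_mul, map_inv, FreeGroup.lift_apply_of, mul_inv_eq_one]
    · have h1 : i + 1 + l = i + l + 1 := by omega
      rw [h1]; exact gen_braid (i + l)
    · exact gen_comm (by omega : (i + l) + 2 ≤ j + l))

/-- The ascending product `σ_i σ_{i+1} ⋯ σ_{i+l-1}` (of `l` factors). -/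
def asc (i l : ℕ) : BInf := ((List.range l).map fun t => σ (i + t)).prod

/-- The descending product `σ_i σ_{i-1} ⋯ σ_{i-k+1}` (of `k` factors). -/
def desc (i k : ℕ) : BInf := ((List.range k).map fun t => σ (i - t)).prod

/-- The block transposition braid
`β_{k,l} = (σ_k σ_{k+1} ⋯ σ_{k+l-1})(σ_{k-1} σ_k ⋯ σ_{k+l-2}) ⋯ (σ_1 σ_2 ⋯ σ_l)`,
with `β_{k,0} = β_{0,l} = 1`. -/
def β (k l : ℕ) : BInf := ((List.range k).map fun r => asc (k - r) l).prod

/-- The positive (Garside) lift `ω_a = β_{1,1} β_{2,1} ⋯ β_{a-1,1}` of the longest element of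
the symmetric group `S_a`, with `ω_0 = ω_1 = 1`. -/
def ω (a : ℕ) : BInf := ((List.range (a - 1)).map fun t => β (t + 1) 1).prod

/-- The copy of the braid group `B_n` inside `B_∞`: the subgroup generated by
`σ_1, …, σ_{n-1}`. -/
def BSub (n : ℕ) : Subgroup BInf := Subgroup.closure {g | ∃ i, 1 ≤ i ∧ i < n ∧ g = σ i}


variable (𝕜 : Type) [CommRing 𝕜]

/-- The canonical embedding of `B_∞` into its group algebra `𝕜B_∞`. -/
noncomputable def ι (g : BInf) : MonoidAlgebra 𝕜 BInf := MonoidAlgebra.of 𝕜 BInf g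

/-- The shift `↑ℓ` extended (as an algebra homomorphism) to the group algebra `𝕜B_∞`. -/
noncomputable def shiftA (l : ℕ) : MonoidAlgebra 𝕜 BInf →ₐ[𝕜] MonoidAlgebra 𝕜 BInf :=
  MonoidAlgebra.mapDomainAlgHom 𝕜 𝕜 (shift l)

/-- The braid shuffle elements `Ш_{m,n} ∈ 𝕜B_∞` (for natural `m, n`), determined by
`Ш_{0,n} = Ш_{m,0} = 1` and the Pascal-type recursion
`Ш_{m,n} = Ш_{m-1,n} + Ш_{m,n-1} β_{m,1}^{↑(n-1)}`. -/
noncomputable def Sh : ℕ → ℕ → MonoidAlgebra 𝕜 BInf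
  | 0, _ => 1
  | _ + 1, 0 => 1
  | m + 1, n + 1 => Sh m (n + 1) + Sh (m + 1) n * ι 𝕜 (shift n (β (m + 1) 1))
  termination_by m n => (m, n)

/-- The braid shuffle elements `Ш_{m,n} ∈ 𝕜B_∞` for integer indices: `Ш_{m,n} = 0` whenever
`m < 0` or `n < 0`. -/
noncomputable def ShZ (m n : ℤ) : MonoidAlgebra 𝕜 BInf :=
  if 0 ≤ m ∧ 0 ≤ n then Sh 𝕜 m.toNat n.toNat else 0

/-- The braid Pochhammer symbol
`P_{k,n}(x,y) = (x - β_{k,1} y)(x - β_{k+1,1} y) ⋯ (x - β_{k+n-1,1} y) ∈ 𝕜B_∞`. -/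
noncomputable def Poch (k n : ℕ) (x y : 𝕜) : MonoidAlgebra 𝕜 BInf :=
  ((List.range n).map fun t =>
    algebraMap 𝕜 (MonoidAlgebra 𝕜 BInf) x - algebraMap 𝕜 (MonoidAlgebra 𝕜 BInf) y * ι 𝕜 (β (k + t) 1)).prod

/-!
Both sides of the identity, viewed as functions `f n a` (for fixed `m, k`), satisfy the
Pascal-type recursion `f (n+1) (a+1) = f n (a+1) + f n a · D` with
`D = σ_{m+n+k} σ_{m+n+k-1} ⋯ σ_{a+1}`, and they agree when `n = 0` or `a = 0`.

For the left side this is the recursion of `Ш` in its second index: the new factor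
`β_{m+n-a,1}^{↑(a+k)}` is the string `σ_{m+n+k} ⋯ σ_{a+k+1}`, which commutes past `β_{k,a}` and
joins the last column `σ_{a+k} ⋯ σ_{a+1}` of `β_{k,a+1}` to form `D`. For the right side the same
recursion is applied to the factor `Ш_{n-c,c}^{↑(m+k)}` of each summand, and the same mechanism
turns `β_{n-c,1}^{↑(m+k+c)} · β_{k,b} β_{m+k-b,c+1}^{↑b}` into `β_{k,b} β_{m+k-b,c}^{↑b} · D`.
-/

lemma commute_sigma {i j : ℕ} (hi : 1 ≤ i) (hij : i + 2 ≤ j) : Commute (σ i) (σ j) :=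
  gen_comm (show i - 1 + 2 ≤ j - 1 by omega)

lemma shift_of (s n : ℕ) : shift s (PresentedGroup.of n) = PresentedGroup.of (n + s) :=
  PresentedGroup.toGroup.of _

lemma shift_sigma (s : ℕ) {i : ℕ} (hi : 1 ≤ i) : shift s (σ i) = σ (i + s) := by
  rw [σ, σ, shift_of, show i - 1 + s = i + s - 1 by omega]

lemma shift_zero_apply (g : BInf) : shift 0 g = g :=
  DFunLike.congr_fun
    (PresentedGroup.ext (φ := shift 0) (ψ := MonoidHom.id _) fun _ => shift_of 0 _) g

lemma shift_shift (s t : ℕ) (g : BInf) : shift s (shift t g) = shift (t + s) g :=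
  DFunLike.congr_fun (PresentedGroup.ext (φ := (shift s).comp (shift t)) (ψ := shift (t + s))
    fun x => by simp only [MonoidHom.comp_apply, shift_of, add_assoc]) g

lemma asc_succ (i l : ℕ) : asc i (l + 1) = asc i l * σ (i + l) := by
  simp [asc, List.range_succ]

lemma desc_succ (i l : ℕ) : desc i (l + 1) = desc i l * σ (i - l) := by
  simp [desc, List.range_succ]

lemma desc_add (i p q : ℕ) : desc i (p + q) = desc i p * desc (i - p) q := by
  induction q with
  | zero => simp [desc]
  | succ q ih => rw [← add_assoc, desc_succ, ih, desc_succ, mul_assoc, Nat.sub_sub]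

lemma desc_mul_desc {i p j q : ℕ} (h : i = j + p) : desc i p * desc j q = desc i (p + q) := by
  rw [desc_add, show i - p = j by omega]

lemma shift_desc (s : ℕ) {i l : ℕ} (hl : l ≤ i) : shift s (desc i l) = desc (i + s) l := by
  simp only [desc, map_list_prod, List.map_map]
  refine congrArg List.prod (List.map_congr_left fun t ht => ?_)
  have ht := List.mem_range.1 ht
  rw [Function.comp_apply, shift_sigma s (by omega), Nat.sub_add_comm (by omega)]

lemma commute_asc_sigma {i l j : ℕ} (hi : 1 ≤ i) (h : i + l + 1 ≤ j) :
    Commute (asc i l) (σ j) :=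
  Commute.list_prod_left _ _ fun x hx => by
    obtain ⟨t, ht, rfl⟩ := List.mem_map.1 hx
    exact commute_sigma (by omega) (by have := List.mem_range.1 ht; omega)

lemma commute_beta_sigma {k l j : ℕ} (h : k + l + 1 ≤ j) : Commute (β k l) (σ j) :=
  Commute.list_prod_left _ _ fun x hx => by
    obtain ⟨r, hr, rfl⟩ := List.mem_map.1 hx
    exact commute_asc_sigma (by have := List.mem_range.1 hr; omega) (by omega)

lemma commute_beta_desc {k l i q : ℕ} (h : k + l + q ≤ i) : Commute (β k l) (desc i q) :=
  Commute.list_prod_right _ _ fun x hx => by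
    obtain ⟨t, ht, rfl⟩ := List.mem_map.1 hx
    exact commute_beta_sigma (by have := List.mem_range.1 ht; omega)

lemma commute_shift_beta_desc {s k l i q : ℕ} (h : s + k + l + q ≤ i) :
    Commute (shift s (β k l)) (desc i q) := by
  have hc := (commute_beta_desc (k := k) (l := l) (i := i - s) (q := q) (by omega)).map (shift s)
  rwa [shift_desc s (by omega), Nat.sub_add_cancel (by omega)] at hc

lemma beta_zero_right (k : ℕ) : β k 0 = 1 := by
  simp [β, asc]

lemma beta_succ_left (k l : ℕ) : β (k + 1) l = asc (k + 1) l * β k l := by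
  simp only [β, List.range_succ_eq_map, List.map_cons, List.prod_cons, List.map_map, Nat.sub_zero]
  congr 2
  exact List.map_congr_left fun r _ => by simp only [Function.comp_apply, Nat.succ_sub_succ]

lemma beta_one (M : ℕ) : β M 1 = desc M M := by
  simp [β, desc, asc]

lemma shift_beta_one (s M : ℕ) : shift s (β M 1) = desc (M + s) M := by
  rw [beta_one, shift_desc s le_rfl]

lemma beta_succ_right (k l : ℕ) : β k (l + 1) = β k l * desc (k + l) k := by
  induction k with
  | zero => simp [β, desc]
  | succ k ih =>
    have hd : desc (k + 1 + l) (k + 1) = σ (k + 1 + l) * desc (k + l) k := by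
      rw [add_comm k 1, desc_add, desc, add_comm 1 k]
      simp [show k + 1 + l - 1 = k + l by omega]
    rw [beta_succ_left, asc_succ, ih, beta_succ_left, hd]
    simp only [← mul_assoc]
    rw [mul_assoc (asc (k + 1) l) (β k l), (commute_beta_sigma (j := k + 1 + l) (by omega)).eq]
    simp only [mul_assoc]

lemma shift_beta_one_mul_beta_mul_shift_beta_succ {k p : ℕ} (b c N : ℕ) (hk : k ≤ p) :
    shift (p + b + c) (β N 1) * β k b * shift b (β p (c + 1)) =
      β k b * shift b (β p c) * desc (N + p + b + c) (N + p) := by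
  have hlast : shift b (desc (p + c) p) = desc (p + b + c) p := by
    rw [shift_desc b (by omega), Nat.add_right_comm]
  have hcomm : Commute (β k b * shift b (β p c)) (desc (N + (p + b + c)) N) :=
    (commute_beta_desc (by omega)).mul_left (commute_shift_beta_desc (by omega))
  rw [shift_beta_one, beta_succ_right, map_mul, hlast, ← mul_assoc, mul_assoc (desc _ _) (β k b),
    ← hcomm.eq, mul_assoc, desc_mul_desc (by omega)]
  simp only [add_assoc]

noncomputable def vandermondeTerm (m n k b c : ℕ) : MonoidAlgebra 𝕜 BInf :=
  shiftA 𝕜 k (ShZ 𝕜 ((m : ℤ) - b) b) * shiftA 𝕜 (m + k) (ShZ 𝕜 ((n : ℤ) - c) c) *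
    ι 𝕜 (β k b) * ι 𝕜 (shift b (β (m + k - b) c))

noncomputable def vandermondeLHS (m n k a : ℕ) : MonoidAlgebra 𝕜 BInf :=
  shiftA 𝕜 k (ShZ 𝕜 ((m : ℤ) + n - a) a) * ι 𝕜 (β k a)

noncomputable def vandermondeRHS (m n k a : ℕ) : MonoidAlgebra 𝕜 BInf :=
  ∑ b ∈ Finset.range (a + 1), vandermondeTerm 𝕜 m n k b (a - b)

section

variable {𝕜}

lemma iota_mul (g h : BInf) : ι 𝕜 (g * h) = ι 𝕜 g * ι 𝕜 h :=
  map_mul (MonoidAlgebra.of 𝕜 BInf) g h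

lemma iota_one : ι 𝕜 (1 : BInf) = 1 :=
  map_one (MonoidAlgebra.of 𝕜 BInf)

lemma shiftA_iota (l : ℕ) (g : BInf) : shiftA 𝕜 l (ι 𝕜 g) = ι 𝕜 (shift l g) := by
  simp [shiftA, ι, MonoidAlgebra.mapDomainAlgHom, MonoidAlgebra.of_apply,
    MonoidAlgebra.mapDomainRingHom_apply]

lemma ShZ_natCast (m n : ℕ) : ShZ 𝕜 m n = Sh 𝕜 m n := by
  simp [ShZ]

lemma ShZ_of_neg_left {m : ℤ} (n : ℤ) (h : m < 0) : ShZ 𝕜 m n = 0 := by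
  rw [ShZ, if_neg (by omega)]

lemma ShZ_zero_right {m : ℤ} (h : 0 ≤ m) : ShZ 𝕜 m 0 = 1 := by
  rw [ShZ, if_pos ⟨h, le_rfl⟩, Int.toNat_zero]
  cases m.toNat <;> rw [Sh]

lemma ShZ_succ_right (M : ℤ) (N : ℕ) :
    ShZ 𝕜 M (N + 1 : ℕ) =
      ShZ 𝕜 (M - 1) (N + 1 : ℕ) + ShZ 𝕜 M N * ι 𝕜 (shift N (β M.toNat 1)) := by
  rcases lt_or_ge M 0 with hM | hM
  · simp [ShZ_of_neg_left _ hM, ShZ_of_neg_left _ (show M - 1 < 0 by omega)]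
  lift M to ℕ using hM with p
  cases p with
  | zero =>
    rw [ShZ_of_neg_left (m := ((0 : ℕ) : ℤ) - 1) _ (by omega), ShZ_natCast, ShZ_natCast, Sh, Sh]
    simp [β, iota_one]
  | succ p =>
    rw [show ((p + 1 : ℕ) : ℤ) - 1 = p by omega, ShZ_natCast, ShZ_natCast, ShZ_natCast,
      Int.toNat_natCast, Sh]

lemma vandermondeTerm_zero_right (m n k b : ℕ) :
    vandermondeTerm 𝕜 m n k b 0 = shiftA 𝕜 k (ShZ 𝕜 ((m : ℤ) - b) b) * ι 𝕜 (β k b) := by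
  simp [vandermondeTerm, ShZ_zero_right (Int.natCast_nonneg n), beta_zero_right, iota_one]

lemma vandermondeTerm_succ_succ (m n k b c : ℕ) :
    vandermondeTerm 𝕜 m (n + 1) k b (c + 1) =
      vandermondeTerm 𝕜 m n k b (c + 1) +
        vandermondeTerm 𝕜 m n k b c * ι 𝕜 (desc (m + n + k) (m + n + k - (b + c))) := by
  have hn : ((n + 1 : ℕ) : ℤ) - ((c + 1 : ℕ) : ℤ) = n - c := by push_cast; ring
  have hn' : (n : ℤ) - ((c + 1 : ℕ) : ℤ) = n - c - 1 := by push_cast; ring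
  simp only [vandermondeTerm]
  rw [hn, hn', ShZ_succ_right, map_add, map_mul, shiftA_iota, shift_shift, mul_add, add_mul,
    add_mul]
  congr 1
  rcases lt_or_ge m b with hb | hb
  · simp [ShZ_of_neg_left _ (show (m : ℤ) - b < 0 by omega)]
  rcases lt_or_ge n c with hc | hc
  · simp [ShZ_of_neg_left _ (show (n : ℤ) - c < 0 by omega)]
  have key := shift_beta_one_mul_beta_mul_shift_beta_succ (k := k) (p := m + k - b) b c (n - c)
    (by omega)
  rw [show m + k - b + b + c = c + (m + k) by omega,
    show n - c + (m + k - b) + b + c = m + n + k by omega,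
    show n - c + (m + k - b) = m + n + k - (b + c) by omega] at key
  rw [show ((n : ℤ) - c).toNat = n - c by omega]
  simp only [mul_assoc, ← iota_mul] at key ⊢
  rw [key]

lemma vandermondeLHS_succ_succ (m n k a : ℕ) :
    vandermondeLHS 𝕜 m (n + 1) k (a + 1) =
      vandermondeLHS 𝕜 m n k (a + 1) +
        vandermondeLHS 𝕜 m n k a * ι 𝕜 (desc (m + n + k) (m + n + k - a)) := by
  have h1 : (m : ℤ) + ((n + 1 : ℕ) : ℤ) - ((a + 1 : ℕ) : ℤ) = m + n - a := by push_cast; ring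
  have h2 : (m : ℤ) + n - ((a + 1 : ℕ) : ℤ) = m + n - a - 1 := by push_cast; ring
  simp only [vandermondeLHS]
  rw [h1, h2, ShZ_succ_right, map_add, map_mul, shiftA_iota, shift_shift, add_mul]
  congr 1
  rcases lt_or_ge (m + n) a with ha | ha
  · simp [ShZ_of_neg_left _ (show (m : ℤ) + n - a < 0 by omega)]
  have key := shift_beta_one_mul_beta_mul_shift_beta_succ (k := k) (p := k) 0 a (m + n - a) le_rfl
  simp only [shift_zero_apply, beta_zero_right, one_mul, mul_one, add_zero] at key
  rw [show m + n - a + k + a = m + n + k by omega, show m + n - a + k = m + n + k - a by omega]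
    at key
  rw [show ((m : ℤ) + n - a).toNat = m + n - a by omega, add_comm a k, mul_assoc, ← iota_mul, key,
    iota_mul, mul_assoc]

lemma vandermondeRHS_succ_succ (m n k a : ℕ) :
    vandermondeRHS 𝕜 m (n + 1) k (a + 1) =
      vandermondeRHS 𝕜 m n k (a + 1) +
        vandermondeRHS 𝕜 m n k a * ι 𝕜 (desc (m + n + k) (m + n + k - a)) := by
  simp only [vandermondeRHS]
  rw [Finset.sum_range_succ, Finset.sum_range_succ _ (a + 1), Finset.sum_mul, Nat.sub_self,
    vandermondeTerm_zero_right, vandermondeTerm_zero_right, add_right_comm,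
    ← Finset.sum_add_distrib]
  congr 1
  refine Finset.sum_congr rfl fun b hb => ?_
  have hb := Finset.mem_range.1 hb
  rw [show a + 1 - b = a - b + 1 by omega, vandermondeTerm_succ_succ, show b + (a - b) = a by omega]

lemma vandermonde_of_n_eq_zero (m k a : ℕ) :
    vandermondeLHS 𝕜 m 0 k a = vandermondeRHS 𝕜 m 0 k a := by
  rw [vandermondeRHS,
    Finset.sum_eq_single_of_mem a (Finset.self_mem_range_succ a) fun b hb hba => ?_]
  · simp [vandermondeLHS, vandermondeTerm_zero_right]
  · have hc : ((0 : ℕ) : ℤ) - ((a - b : ℕ) : ℤ) < 0 := by have := Finset.mem_range.1 hb; omega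
    rw [vandermondeTerm, ShZ_of_neg_left _ hc, map_zero, mul_zero, zero_mul, zero_mul]

lemma vandermonde_of_a_eq_zero (m n k : ℕ) :
    vandermondeLHS 𝕜 m n k 0 = vandermondeRHS 𝕜 m n k 0 := by
  simp [vandermondeLHS, vandermondeRHS, vandermondeTerm_zero_right, beta_zero_right, iota_one,
    ShZ_zero_right (Int.natCast_nonneg m), ShZ_zero_right (by positivity : (0 : ℤ) ≤ m + n)]

end

/-- braid Vandermonde identity: for all `a, m, n, k ≥ 0`,
`Ш_{m+n-a,a}^{↑k} β_{k,a} = Σ_{b+c=a} Ш_{m-b,b}^{↑k} Ш_{n-c,c}^{↑(m+k)} β_{k,b} β_{m+k-b,c}^{↑b}`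
(summands with `b > m` or `c > n` vanish). -/
theorem braid_vandermonde (a m n k : ℕ) :
    shiftA 𝕜 k (ShZ 𝕜 ((m : ℤ) + n - a) a) * ι 𝕜 (β k a) =
      ∑ b ∈ Finset.range (a + 1),
        shiftA 𝕜 k (ShZ 𝕜 ((m : ℤ) - b) b) *
          shiftA 𝕜 (m + k) (ShZ 𝕜 ((n : ℤ) - ((a - b : ℕ) : ℤ)) ((a - b : ℕ) : ℤ)) *
          ι 𝕜 (β k b) * ι 𝕜 (shift b (β (m + k - b) (a - b))) := by
  change vandermondeLHS 𝕜 m n k a = vandermondeRHS 𝕜 m n k a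
  induction n generalizing a with
  | zero => exact vandermonde_of_n_eq_zero m k a
  | succ n ih =>
    cases a with
    | zero => exact vandermonde_of_a_eq_zero m (n + 1) k
    | succ a => rw [vandermondeLHS_succ_succ, vandermondeRHS_succ_succ, ih, ih]

end BraidPaper
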